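/- The standard dual equivalence graph G_λ satisfies axiom (ax5): if |i−j| ≥ 3 and T admits both an i-edge (to U) and U admits a j-edge (to W), then there is a standard tableau X with a j-edge from T to X and an i-edge from X to W; equivalently, the involutions D_i and D_j commute on tableaux where both are defined. -/

import Mathlib

/-- A semistandard Young tableau (French convention), listed as rows from top
to bottom: positive entries, rows weakly increasing, row lengths weakly
increasing downwards, and entries strictly increasing up columns. -/
def IsSSYT (rows : List (List ℕ)) : Prop :=
  (∀ r ∈ rows, ∀ x ∈ r, 1 ≤ x) ∧
  (∀ r ∈ rows, r.Chain' (· ≤ ·)) ∧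
  rows.Chain' (fun upper lower =>
    upper.length ≤ lower.length ∧
    ∀ c < upper.length, lower.getD c 0 < upper.getD c 0)

/-- The reading word: rows read from top to bottom, left to right. -/
def readingWord (rows : List (List ℕ)) : List ℕ := rows.flatten

/-- A standard Young tableau with entries exactly 1, ..., n. -/
def IsSYT (n : ℕ) (rows : List (List ℕ)) : Prop :=
  IsSSYT rows ∧ (readingWord rows).Perm (List.range' 1 n)

/-- Swap the values x and y in a word. -/
def swapVals (x y : ℕ) (w : List ℕ) : List ℕ :=
  w.map (fun z => if z = x then y else if z = y then x else z)

/-- Haiman's elementary dual equivalence on the values i-1, i, i+1: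
applicable when i is not the middle one of the three (by position), it
exchanges i with the other outer value. -/
def EDE (i : ℕ) (u v : List ℕ) : Prop :=
  2 ≤ i ∧
  ((u.idxOf i < u.idxOf (i + 1) ∧ u.idxOf (i + 1) < u.idxOf (i - 1) ∧
      v = swapVals i (i - 1) u) ∨
   (u.idxOf i < u.idxOf (i - 1) ∧ u.idxOf (i - 1) < u.idxOf (i + 1) ∧
      v = swapVals i (i + 1) u) ∨
   (u.idxOf (i - 1) < u.idxOf (i + 1) ∧ u.idxOf (i + 1) < u.idxOf i ∧
      v = swapVals i (i - 1) u) ∨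
   (u.idxOf (i + 1) < u.idxOf (i - 1) ∧ u.idxOf (i - 1) < u.idxOf i ∧
      v = swapVals i (i + 1) u))

/-- The signature: +1 if j appears to the left of j+1, -1 otherwise. -/
def sgn (w : List ℕ) (j : ℕ) : ℤ :=
  if w.idxOf j < w.idxOf (j + 1) then 1 else -1

/-!
Let σ = (i a) and τ = (j b) be the transpositions of consecutive values performed by the
i-move T → U and the j-move U → W, and take X = τ T. Since |i - j| ≥ 3, σ and τ have disjoint
supports, so they commute and each fixes the three values inspected by the other move; hence
the j-move takes T to X and the i-move takes X to στ T = W. X is standard because τ can only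
reverse the order of the two entries j and b, which σ fixes, so any violation in X would
reappear in W = στ T.
-/

open Equiv List

theorem List.mem_map_equiv {α β : Type*} {e : α ≃ β} {b : β} {l : List α} :
    b ∈ l.map e ↔ e.symm b ∈ l := by
  simp only [mem_map, ← Equiv.eq_symm_apply, exists_eq_right]

theorem List.mem_iff_mem_of_map_swap_perm {α : Type*} [DecidableEq α] {x y : α} {l : List α}
    (h : l.map (Equiv.swap x y) ~ l) : x ∈ l ↔ y ∈ l := by
  rw [← h.mem_iff, mem_map_equiv, Equiv.symm_swap, swap_apply_left]

theorem List.map_swap_perm_self {α : Type*} [DecidableEq α] {x y : α} {l : List α} (hl : l.Nodup)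
    (hx : x ∈ l) (hy : y ∈ l) : l.map (Equiv.swap x y) ~ l := by
  refine (perm_ext_iff_of_nodup (hl.map (Equiv.swap x y).injective) hl).2 fun z => ?_
  rw [mem_map_equiv, Equiv.symm_swap, swap_apply_def]
  split_ifs <;> simp_all

theorem List.idxOf_map_of_injective {α β : Type*} [DecidableEq α] [DecidableEq β] {f : α → β}
    (hf : Function.Injective f) (c : α) (l : List α) : (l.map f).idxOf (f c) = l.idxOf c := by
  simp only [idxOf, findIdx_map]
  congr 1
  funext z
  simp [hf.eq_iff]

theorem List.IsChain.imp₂ {α : Type*} {R S Q : α → α → Prop} (h : ∀ a b, R a b → S a b → Q a b)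
    {l : List α} (hR : l.IsChain R) (hS : l.IsChain S) : l.IsChain Q := by
  rw [isChain_iff_getElem] at hR hS ⊢
  exact fun k hk => h _ _ (hR k hk) (hS k hk)

theorem List.getD_map_of_lt {α β : Type*} {l : List α} {c : ℕ} (hc : c < l.length) (f : α → β)
    (d : α) (e : β) : (l.map f).getD c e = f (l.getD c d) := by
  simp [hc]

theorem swap_lt_swap_of_swap_swap_lt {i a j b x y : ℕ} (hb : b = j - 1 ∨ b = j + 1)
    (hij : i ≠ j) (hib : i ≠ b) (haj : a ≠ j) (hab : a ≠ b) (hxy : x < y)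
    (h : swap j b (swap i a x) < swap j b (swap i a y)) : swap j b x < swap j b y := by
  simp only [swap_apply_def] at h ⊢
  split_ifs at h ⊢ <;> omega

theorem swap_le_swap_of_swap_swap_le {i a j b x y : ℕ} (hb : b = j - 1 ∨ b = j + 1)
    (hij : i ≠ j) (hib : i ≠ b) (haj : a ≠ j) (hab : a ≠ b) (hxy : x ≤ y)
    (h : swap j b (swap i a x) ≤ swap j b (swap i a y)) : swap j b x ≤ swap j b y := by
  simp only [swap_apply_def] at h ⊢
  split_ifs at h ⊢ <;> omega

theorem readingWord_map_map (T : List (List ℕ)) (f : ℕ → ℕ) :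
    readingWord (T.map (map f)) = (readingWord T).map f :=
  map_flatten.symm

theorem eq_map_map_of_readingWord_eq {T W : List (List ℕ)} {f : ℕ → ℕ}
    (hsh : W.map length = T.map length) (hw : readingWord W = (readingWord T).map f) :
    W = T.map (map f) :=
  eq_iff_flatten_eq.2 ⟨by rw [← readingWord, hw, ← readingWord_map_map]; rfl, by simp [hsh]⟩

theorem IsSSYT.map_of_isSSYT_map {T : List (List ℕ)} {f g : ℕ → ℕ}
    (hpos : ∀ x, 1 ≤ x → 1 ≤ f x) (hle : ∀ x y, x ≤ y → g x ≤ g y → f x ≤ f y)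
    (hlt : ∀ x y, x < y → g x < g y → f x < f y)
    (hT : IsSSYT T) (hg : IsSSYT (T.map (map g))) : IsSSYT (T.map (map f)) := by
  obtain ⟨hTpos, hTrows, hTcols⟩ := hT
  obtain ⟨-, hgrows, hgcols⟩ := hg
  refine ⟨?_, ?_, ?_⟩
  · intro r hr z hz
    obtain ⟨t, ht, rfl⟩ := mem_map.1 hr
    obtain ⟨x, hx, rfl⟩ := mem_map.1 hz
    exact hpos x (hTpos t ht x hx)
  · intro r hr
    obtain ⟨t, ht, rfl⟩ := mem_map.1 hr
    have := hgrows _ (mem_map_of_mem ht)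
    rw [List.Chain', isChain_map] at this ⊢
    exact (hTrows t ht).imp₂ hle this
  · rw [List.Chain', isChain_map] at hgcols ⊢
    refine hTcols.imp₂ (fun r s hrs hgrs => ?_) hgcols
    simp only [length_map] at hgrs ⊢
    refine ⟨hrs.1, fun c hc => ?_⟩
    have hcs := hc.trans_le hrs.1
    have hg := hgrs.2 c hc
    rw [getD_map_of_lt hc _ 0, getD_map_of_lt hcs _ 0] at hg ⊢
    exact hlt _ _ (hrs.2 c hc) hg

theorem swapVals_eq_map_swap (x y : ℕ) (w : List ℕ) : swapVals x y w = w.map (swap x y) := rfl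

theorem EDE.map_perm {k : ℕ} {u v : List ℕ} (h : EDE k u v) {π : Perm ℕ}
    (h₀ : π (k - 1) = k - 1) (h₁ : π k = k) (h₂ : π (k + 1) = k + 1) :
    EDE k (u.map π) (v.map π) := by
  have hidx : ∀ c, π c = c → (u.map π).idxOf c = u.idxOf c := fun c hc => by
    simpa only [hc] using idxOf_map_of_injective π.injective c u
  have hswap : ∀ b, π b = b → swapVals k b (u.map π) = (swapVals k b u).map π := fun b hb => by
    simp only [swapVals_eq_map_swap, map_map]
    congr 1
    funext z
    simpa [hb, h₁] using (DFunLike.congr_fun (mul_swap_eq_swap_mul π k b) z).symm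
  unfold EDE at h ⊢
  rw [hidx _ h₀, hidx _ h₁, hidx _ h₂, hswap _ h₀, hswap _ h₂]
  have hv : ∀ {s}, v = s → v.map π = s.map π := congrArg _
  exact ⟨h.1, h.2.imp (.imp_right (.imp_right hv)) <| .imp (.imp_right (.imp_right hv)) <|
    .imp (.imp_right (.imp_right hv)) (.imp_right (.imp_right hv))⟩

theorem EDE.exists_swap_of_perm {k : ℕ} {u v l : List ℕ} (h : EDE k u v) (hu : u ~ l)
    (hv : v ~ l) : ∃ b, (b = k - 1 ∨ b = k + 1) ∧ v = u.map (swap k b) ∧ k ∈ l ∧ b ∈ l := by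
  have mem_of_lt : ∀ {x y}, u.idxOf x < u.idxOf y → x ∈ u := fun hxy =>
    idxOf_lt_length_iff.1 (hxy.trans_le idxOf_le_length)
  obtain ⟨b, hb, rfl, hmem⟩ :
      ∃ b, (b = k - 1 ∨ b = k + 1) ∧ v = u.map (swap k b) ∧ (k ∈ u ∨ b ∈ u) := by
    rcases h.2 with ⟨hlt, -, rfl⟩ | ⟨hlt, -, rfl⟩ | ⟨hlt, -, rfl⟩ | ⟨hlt, -, rfl⟩
    · exact ⟨k - 1, .inl rfl, rfl, .inl (mem_of_lt hlt)⟩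
    · exact ⟨k + 1, .inr rfl, rfl, .inl (mem_of_lt hlt)⟩
    · exact ⟨k - 1, .inl rfl, rfl, .inr (mem_of_lt hlt)⟩
    · exact ⟨k + 1, .inr rfl, rfl, .inr (mem_of_lt hlt)⟩
  have hiff : k ∈ u ↔ b ∈ u := mem_iff_mem_of_map_swap_perm (hv.trans hu.symm)
  have hk : k ∈ u := hmem.elim id hiff.2
  exact ⟨b, hb, rfl, hu.subset hk, hu.subset (hiff.1 hk)⟩

theorem EDE.map_swap_of_far {k i a : ℕ} {u v : List ℕ} (h : EDE k u v)
    (ha : a = i - 1 ∨ a = i + 1) (hik : i + 3 ≤ k ∨ k + 3 ≤ i) :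
    EDE k (u.map (swap i a)) (v.map (swap i a)) :=
  h.map_perm (swap_apply_of_ne_of_ne (by omega) (by omega))
    (swap_apply_of_ne_of_ne (by omega) (by omega)) (swap_apply_of_ne_of_ne (by omega) (by omega))

theorem stmt17_general (n i j : ℕ) (hij : 3 ≤ |(i : ℤ) - (j : ℤ)|)
    (T U W : List (List ℕ)) (hT : IsSYT n T) (hU : IsSYT n U) (hW : IsSYT n W)
    (hshW : W.map List.length = T.map List.length)
    (h1 : EDE i (readingWord T) (readingWord U))
    (h2 : EDE j (readingWord U) (readingWord W)) :
    ∃ X : List (List ℕ), IsSYT n X ∧ X.map List.length = T.map List.length ∧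
      EDE j (readingWord T) (readingWord X) ∧
      EDE i (readingWord X) (readingWord W) := by
  have hgap : i + 3 ≤ j ∨ j + 3 ≤ i := by rcases le_abs'.1 hij with h | h <;> omega
  obtain ⟨a, ha, hTU, -, -⟩ := h1.exists_swap_of_perm hT.2 hU.2
  obtain ⟨b, hb, hUW, hj, hb'⟩ := h2.exists_swap_of_perm hU.2 hW.2
  have hi2 : 2 ≤ i := h1.1
  have hj2 : 2 ≤ j := h2.1
  obtain ⟨hij', hib, haj, hab⟩ : i ≠ j ∧ i ≠ b ∧ a ≠ j ∧ a ≠ b := by omega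
  have hWT : W = T.map (map (swap j b ∘ swap i a)) :=
    eq_map_map_of_readingWord_eq hshW (by rw [hUW, hTU, map_map])
  have hconj : ∀ z, swap i a (swap j b (swap i a z)) = swap j b z := fun z => by
    rw [← Perm.mul_apply, ((Perm.disjoint_swap_swap (by simp; omega)).commute).eq,
      Perm.mul_apply, swap_apply_self]
  refine ⟨T.map (map (swap j b)), ⟨?_, ?_⟩, by simp, ?_, ?_⟩
  · refine hT.1.map_of_isSSYT_map (g := swap j b ∘ swap i a) (fun x hx => ?_)
      (fun _ _ => swap_le_swap_of_swap_swap_le hb hij' hib haj hab)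
      (fun _ _ => swap_lt_swap_of_swap_swap_lt hb hij' hib haj hab) (hWT ▸ hW.1)
    rw [swap_apply_def]
    split_ifs <;> omega
  · rw [readingWord_map_map]
    exact (hT.2.map _).trans (map_swap_perm_self nodup_range' hj hb')
  · simpa [hUW, hTU, readingWord_map_map, map_map, Function.comp_def, hconj] using
      h2.map_swap_of_far ha (by omega)
  · rw [readingWord_map_map, hUW]
    exact h1.map_swap_of_far hb (by omega)

/-- Axiom (ax5): for |i - j| ≥ 3 the involutions D_i and D_j commute. -/
theorem stmt17 (n i j : ℕ) (hij : 3 ≤ |(i : ℤ) - (j : ℤ)|)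
    (T U W : List (List ℕ)) (hT : IsSYT n T) (hU : IsSYT n U) (hW : IsSYT n W)
    (hshU : U.map List.length = T.map List.length)
    (hshW : W.map List.length = T.map List.length)
    (h1 : EDE i (readingWord T) (readingWord U))
    (h2 : EDE j (readingWord U) (readingWord W)) :
    ∃ X : List (List ℕ), IsSYT n X ∧ X.map List.length = T.map List.length ∧
      EDE j (readingWord T) (readingWord X) ∧
      EDE i (readingWord X) (readingWord W) :=
  stmt17_general n i j hij T U W hT hU hW hshW h1 h2
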